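/- Let u be a divergence-free Schwartz vector field on ℝ³ and Q a Schwartz matrix-valued field on ℝ³. Then ∫_{ℝ³} (u·∇)Q : ΔQ dx + ∫_{ℝ³} (∇Q ⊗ ∇Q) : ∇u dx = 0, where (∇Q ⊗ ∇Q)_{ij} = ∂_i Q_{αβ} ∂_j Q_{αβ}, X : Y = X_{ij}Y_{ij}, and (u·∇)Q : ΔQ = u_β (∂_β Q_{γδ}) (ΔQ_{γδ}) (summation convention). -/

import Mathlib

open MeasureTheory Real Filter
open scoped RealInnerProductSpace ENNReal NNReal BigOperators Topology

noncomputable section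

/-- Physical space `ℝ³`. -/
abbrev E3 : Type := EuclideanSpace ℝ (Fin 3)
/-- Values of vector fields. -/
abbrev Vec : Type := Fin 3 → ℝ
/-- Values of matrix (`Q`-tensor) fields. -/
abbrev Mat : Type := Fin 3 → Fin 3 → ℝ

/-- `i`-th partial derivative of a scalar field on `ℝ³`. -/
def pd (i : Fin 3) (f : E3 → ℝ) (x : E3) : ℝ :=
  fderiv ℝ f x (EuclideanSpace.single i 1)

/-- Laplacian of a scalar field. -/
def lap (f : E3 → ℝ) (x : E3) : ℝ := ∑ i, pd i (pd i f) x

/-- Componentwise Laplacian of a vector field. -/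
def vecLap (v : E3 → Vec) (x : E3) : Vec := fun i => lap (fun y => v y i) x

/-- Componentwise Laplacian of a matrix field. -/
def matLap (A : E3 → Mat) (x : E3) : Mat := fun i j => lap (fun y => A y i j) x

/-- Matrix product. -/
def mmul (A B : Mat) : Mat := fun i j => ∑ k, A i k * B k j

/-- Frobenius inner product `X : Y = X_{ij} Y_{ij}`. -/
def fip (A B : Mat) : ℝ := ∑ i, ∑ j, A i j * B i j

/-- Frobenius norm of a matrix. -/
def frob (A : Mat) : ℝ := Real.sqrt (fip A A)

/-- Trace of a matrix. -/
def mtrace (A : Mat) : ℝ := ∑ i, A i i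

/-- Projection onto traceless matrices, `L[A] = A - (tr A/3) I`. -/
def tlProj (A : Mat) : Mat := fun i j => A i j - mtrace A / 3 * (if i = j then 1 else 0)

/-- Symmetric and traceless matrices. -/
def symTraceless (A : Mat) : Prop := (∀ i j, A i j = A j i) ∧ mtrace A = 0

/-- Gradient matrix of a vector field, `(∇u)_{ij} = ∂_j u_i`. -/
def gradVec (u : E3 → Vec) (x : E3) : Mat := fun i j => pd j (fun y => u y i) x

/-- Skew-symmetric part `Ω(u) = (∇u − ∇ᵀu)/2`. -/
def omegaM (u : E3 → Vec) (x : E3) : Mat :=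
  fun i j => (gradVec u x i j - gradVec u x j i) / 2

/-- Pointwise divergence-free vector field. -/
def DivFree (u : E3 → Vec) : Prop := ∀ x, ∑ i, pd i (fun y => u y i) x = 0

/-- `(∇A ⊗ ∇B)_{ij} = ∂_i A_{αβ} ∂_j B_{αβ}` (summation convention). -/
def gradTensor (A B : E3 → Mat) (x : E3) : Mat :=
  fun i j => ∑ α, ∑ β, pd i (fun y => A y α β) x * pd j (fun y => B y α β) x

/-- Advective derivative `(u·∇)f` of a scalar field. -/
def advect (u : E3 → Vec) (f : E3 → ℝ) (x : E3) : ℝ := ∑ i, u x i * pd i f x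

/-- `(u·∇)A` for a matrix field. -/
def advectMat (u : E3 → Vec) (A : E3 → Mat) (x : E3) : Mat :=
  fun i j => advect u (fun y => A y i j) x

/-- Gradient of a matrix field: `(∇A)_k = ∂_k A`. -/
def gradM (A : E3 → Mat) (x : E3) : Fin 3 → Mat :=
  fun k i j => pd k (fun y => A y i j) x

/-- Curl of a vector field on `ℝ³`. -/
def curl (u : E3 → Vec) (x : E3) : Vec := fun i =>
  if i = 0 then pd 1 (fun y => u y 2) x - pd 2 (fun y => u y 1) x
  else if i = 1 then pd 2 (fun y => u y 0) x - pd 0 (fun y => u y 2) x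
  else pd 0 (fun y => u y 1) x - pd 1 (fun y => u y 0) x

/-- `∂F(Q) = aQ + bQ² + c|Q|²Q` for the Landau–de Gennes potential. -/
def dFQ (a b c : ℝ) (A : Mat) : Mat :=
  fun i j => a * A i j + b * mmul A A i j + c * fip A A * A i j

/-- Landau–de Gennes bulk potential `F(Q)`. -/
def FQ (a b c : ℝ) (A : Mat) : ℝ :=
  a / 2 * fip A A + b / 3 * mtrace (mmul (mmul A A) A) + c / 4 * fip A A ^ 2

/-- `H = ΔQ − L[∂F(Q)]`. -/
def HQ (a b c : ℝ) (A : E3 → Mat) (x : E3) : Mat :=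
  fun i j => matLap A x i j - tlProj (dFQ a b c (A x)) i j

/-- `Σ(Q) = ΔQ·Q − Q·ΔQ − ∇Q⊗∇Q`. -/
def sigmaQ (A : E3 → Mat) (x : E3) : Mat :=
  mmul (matLap A x) (A x) - mmul (A x) (matLap A x) - gradTensor A A x

/-- Euclidean norm of a vector. -/
def vnorm (v : Vec) : ℝ := Real.sqrt (∑ i, v i ^ 2)

/-- Frobenius-type norm of a third order tensor. -/
def tnorm (Tn : Fin 3 → Mat) : ℝ := Real.sqrt (∑ k, fip (Tn k) (Tn k))

/-- `L^r` norm of a scalar field. -/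
def LpS (f : E3 → ℝ) (r : ℝ≥0∞) : ℝ≥0∞ := eLpNorm f r volume
/-- `L^r` norm of a vector field. -/
def LpV (v : E3 → Vec) (r : ℝ≥0∞) : ℝ≥0∞ := eLpNorm (fun x => vnorm (v x)) r volume
/-- `L^r` norm of a matrix field (with the Frobenius norm on matrices). -/
def LpM (A : E3 → Mat) (r : ℝ≥0∞) : ℝ≥0∞ := eLpNorm (fun x => frob (A x)) r volume
/-- `L^r` norm of a third order tensor field. -/
def LpT (F : E3 → Fin 3 → Mat) (r : ℝ≥0∞) : ℝ≥0∞ := eLpNorm (fun x => tnorm (F x)) r volume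

/-- Spatial `L²` pairing of vector fields. -/
def ipV (f g : E3 → Vec) : ℝ := ∫ x, ∑ i, f x i * g x i
/-- Spatial `L²` pairing of matrix fields. -/
def ipM (F G : E3 → Mat) : ℝ := ∫ x, fip (F x) (G x)
/-- Spatial `L²` pairing of third order tensor fields. -/
def ipT (F G : E3 → Fin 3 → Mat) : ℝ := ∫ x, ∑ k, fip (F x k) (G x k)

/-- Hypotheses on the Littlewood–Paley bump function `χ`. -/
structure IsLPBump (χ : E3 → ℝ) : Prop where
  smooth : ContDiff ℝ (⊤ : ℕ∞) χ
  compSupp : HasCompactSupport χ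
  nonneg : ∀ ξ, 0 ≤ χ ξ
  radial : ∀ ξ η : E3, ‖ξ‖ = ‖η‖ → χ ξ = χ η
  eq_one : ∀ ξ : E3, ‖ξ‖ ≤ 3 / 4 → χ ξ = 1
  eq_zero : ∀ ξ : E3, 1 ≤ ‖ξ‖ → χ ξ = 0

/-- (Real) inverse Fourier transform; for a real, even, integrable function `g`
this coincides with `F⁻¹ g`. -/
def invFT (g : E3 → ℝ) (x : E3) : ℝ := ∫ ξ, g ξ * Real.cos (2 * π * (inner ℝ x ξ : ℝ))

/-- `φ(ξ) = χ(ξ/2) − χ(ξ)`. -/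
def lpPhi (χ : E3 → ℝ) (ξ : E3) : ℝ := χ ((2:ℝ)⁻¹ • ξ) - χ ξ

/-- `λ_q = 2^q`. -/
def lam (q : ℤ) : ℝ := 2 ^ q

/-- Littlewood–Paley projection `Δ_q` of a scalar field (`q = -1` uses the kernel `F⁻¹χ`). -/
def lpD (χ : E3 → ℝ) (q : ℤ) (v : E3 → ℝ) (x : E3) : ℝ :=
  if 0 ≤ q then lam q ^ 3 * ∫ y, invFT (lpPhi χ) (lam q • (x - y)) * v y
  else ∫ y, invFT χ (x - y) * v y

/-- Low-frequency truncation `v_{≤N} = ∑_{-1 ≤ q ≤ N} v_q`. -/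
def lpLe (χ : E3 → ℝ) (N : ℤ) (v : E3 → ℝ) (x : E3) : ℝ :=
  ∑ q ∈ Finset.Icc (-1 : ℤ) N, lpD χ q v x

/-- `Δ_q` on vector fields. -/
def lpV (χ : E3 → ℝ) (q : ℤ) (v : E3 → Vec) (x : E3) : Vec :=
  fun i => lpD χ q (fun y => v y i) x
/-- `v_{≤N}` for vector fields. -/
def lpVLe (χ : E3 → ℝ) (N : ℤ) (v : E3 → Vec) (x : E3) : Vec :=
  fun i => lpLe χ N (fun y => v y i) x
/-- `Δ_q` on matrix fields. -/
def lpM (χ : E3 → ℝ) (q : ℤ) (A : E3 → Mat) (x : E3) : Mat :=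
  fun i j => lpD χ q (fun y => A y i j) x
/-- `A_{≤N}` for matrix fields. -/
def lpMLe (χ : E3 → ℝ) (N : ℤ) (A : E3 → Mat) (x : E3) : Mat :=
  fun i j => lpLe χ N (fun y => A y i j) x
/-- `Δ_q` on third order tensor fields. -/
def lpT (χ : E3 → ℝ) (q : ℤ) (F : E3 → Fin 3 → Mat) (x : E3) : Fin 3 → Mat :=
  fun k i j => lpD χ q (fun y => F y k i j) x

/-- Besov `B⁰_{∞,∞}` norm of a matrix field: `sup_{q ≥ -1} ‖Δ_q A‖_∞`. -/
def besov0M (χ : E3 → ℝ) (A : E3 → Mat) : ℝ≥0∞ :=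
  ⨆ q ∈ Set.Ici (-1 : ℤ), LpM (lpM χ q A) ∞

/-- Littlewood–Paley `H^s` norm of a vector field:
`(∑_{q ≥ -1} λ_q^{2s} ‖v_q‖₂²)^{1/2}`. -/
def hsV (χ : E3 → ℝ) (s : ℝ) (v : E3 → Vec) : ℝ≥0∞ :=
  (∑' q : ℕ, ENNReal.ofReal (lam ((q : ℤ) - 1) ^ (2 * s)) *
      LpV (lpV χ ((q : ℤ) - 1) v) 2 ^ 2) ^ (1 / 2 : ℝ)

/-- Littlewood–Paley `H^s` norm of a third order tensor field. -/
def hsT (χ : E3 → ℝ) (s : ℝ) (F : E3 → Fin 3 → Mat) : ℝ≥0∞ :=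
  (∑' q : ℕ, ENNReal.ofReal (lam ((q : ℤ) - 1) ^ (2 * s)) *
      LpT (lpT χ ((q : ℤ) - 1) F) 2 ^ 2) ^ (1 / 2 : ℝ)

/-- Smooth compactly supported time-dependent vector test field. -/
def SmoothCompactVF (φ : ℝ → E3 → Vec) : Prop :=
  (∀ i, ContDiff ℝ (⊤ : ℕ∞) fun p : ℝ × E3 => φ p.1 p.2 i) ∧
    HasCompactSupport fun p : ℝ × E3 => φ p.1 p.2

/-- Smooth compactly supported time-dependent matrix test field. -/
def SmoothCompactMF (ψ : ℝ → E3 → Mat) : Prop :=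
  (∀ i j, ContDiff ℝ (⊤ : ℕ∞) fun p : ℝ × E3 => ψ p.1 p.2 i j) ∧
    HasCompactSupport fun p : ℝ × E3 => ψ p.1 p.2

/-- Weak solution of the Beris–Edwards system with `ξ = 0` on `[0,T]`
(Definition of Paicu–Zarnescu type, as in the paper). -/
structure IsWeakSolution (ν μ a b c T : ℝ) (u : ℝ → E3 → Vec) (Q : ℝ → E3 → Mat)
    (u₀ : E3 → Vec) (Q₀ : E3 → Mat) : Prop where
  uL2 : ∀ t ∈ Set.Icc (0:ℝ) T, LpV (u t) 2 ≠ ∞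
  u_weakCont : ∀ g : E3 → Vec, LpV g 2 ≠ ∞ →
    ContinuousOn (fun t => ipV (u t) g) (Set.Icc 0 T)
  uL2H1 : (∫⁻ t in Set.Ioc (0:ℝ) T, (LpV (u t) 2 ^ 2 + LpM (gradVec (u t)) 2 ^ 2)) ≠ ∞
  QH1 : ∀ t ∈ Set.Icc (0:ℝ) T, LpM (Q t) 2 ≠ ∞ ∧ LpT (gradM (Q t)) 2 ≠ ∞
  Q_weakCont : ∀ G : E3 → Mat, LpM G 2 ≠ ∞ →
    ContinuousOn (fun t => ipM (Q t) G) (Set.Icc 0 T)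
  Q_weakContGrad : ∀ G : E3 → Fin 3 → Mat, LpT G 2 ≠ ∞ →
    ContinuousOn (fun t => ipT (gradM (Q t)) G) (Set.Icc 0 T)
  QL2H2 : (∫⁻ t in Set.Ioc (0:ℝ) T,
      (LpM (Q t) 2 ^ 2 + LpT (gradM (Q t)) 2 ^ 2 + LpM (matLap (Q t)) 2 ^ 2)) ≠ ∞
  Q_symTraceless : ∀ t ∈ Set.Icc (0:ℝ) T, ∀ x, symTraceless (Q t x)
  u_divFree : ∀ t ∈ Set.Icc (0:ℝ) T, ∀ ζ : E3 → ℝ, ContDiff ℝ (⊤ : ℕ∞) ζ → HasCompactSupport ζ →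
    (∫ x, ∑ i, u t x i * pd i ζ x) = 0
  u_eq : ∀ φ : ℝ → E3 → Vec, SmoothCompactVF φ → (∀ t, DivFree (φ t)) →
    ∀ t ∈ Set.Icc (0:ℝ) T,
      ipV (u t) (φ t) - ipV u₀ (φ 0) -
          ∫ s in (0:ℝ)..t,
            (ipV (u s) (fun x i => deriv (fun τ => φ τ x i) s) +
              ν * ipV (u s) (vecLap (φ s))) =
        ∫ s in (0:ℝ)..t,
          (ipV (fun x i => advect (u s) (fun y => φ s y i) x) (u s) +
            ipM (fun x => mmul (Q s x) (HQ a b c (Q s) x) - mmul (HQ a b c (Q s) x) (Q s x) +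
                gradTensor (Q s) (Q s) x) (gradVec (φ s)))
  Q_eq : ∀ ψ : ℝ → E3 → Mat, SmoothCompactMF ψ → (∀ t x, symTraceless (ψ t x)) →
    ∀ t ∈ Set.Icc (0:ℝ) T,
      ipM (Q t) (ψ t) - ipM Q₀ (ψ 0) -
          ∫ s in (0:ℝ)..t,
            (ipM (Q s) (fun x i j => deriv (fun τ => ψ τ x i j) s) +
              μ * ipM (Q s) (matLap (ψ s))) =
        ∫ s in (0:ℝ)..t,
          (ipM (advectMat (u s) (ψ s)) (Q s) -
            ipM (fun x => mmul (omegaM (u s) x) (Q s x) - mmul (Q s x) (omegaM (u s) x)) (ψ s) -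
            ipM (fun x => tlProj (dFQ a b c (Q s x))) (ψ s))

/-- `(u,Q)` is regular on `I` : for some `s > 1/2` the `H^s` norms of `u` and `∇Q`
are finite and continuous on `I`. -/
def IsRegularOn (χ : E3 → ℝ) (u : ℝ → E3 → Vec) (Q : ℝ → E3 → Mat) (I : Set ℝ) : Prop :=
  ∃ s : ℝ, 1 / 2 < s ∧
    ContinuousOn (fun t => hsV χ s (u t)) I ∧
    ContinuousOn (fun t => hsT χ s (gradM (Q t))) I ∧
    ∀ t ∈ I, hsV χ s (u t) ≠ ∞ ∧ hsT χ s (gradM (Q t)) ≠ ∞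

/-- `λ_p^{-1+3/r} ‖u_p‖_r < c_r min{ν,μ}` for all `p > q`. -/
def DissipAt (χ : E3 → ℝ) (r ν μ cr : ℝ) (u : E3 → Vec) (q : ℕ) : Prop :=
  ∀ p : ℤ, (q : ℤ) < p →
    ENNReal.ofReal (lam p ^ (-1 + 3 / r)) * LpV (lpV χ p u) (ENNReal.ofReal r) <
      ENNReal.ofReal (cr * min ν μ)

/-- `N` realizes the dissipation wavenumber `Λ = 2^N` of `u`. -/
def IsDissipWavenumber (χ : E3 → ℝ) (r ν μ cr : ℝ) (u : E3 → Vec) (N : ℕ) : Prop :=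
  DissipAt χ r ν μ cr u N ∧ ∀ q : ℕ, q < N → ¬ DissipAt χ r ν μ cr u q

/-- Commutator `[Δ_q, w·∇] f = Δ_q(w·∇f) − w·∇Δ_q f`. -/
def commAdv (χ : E3 → ℝ) (q : ℤ) (w : E3 → Vec) (f : E3 → ℝ) (x : E3) : ℝ :=
  lpD χ q (advect w f) x - advect w (lpD χ q f) x

namespace AGTC

open SchwartzMap

variable {F G : Type*} [NormedAddCommGroup F] [NormedSpace ℝ F]
  [NormedAddCommGroup G] [NormedSpace ℝ G]

/-- Postcomposition of a Schwartz map with a continuous linear map. -/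
def postcomp (L : F →L[ℝ] G) (f : SchwartzMap E3 F) : SchwartzMap E3 G where
  toFun x := L (f x)
  smooth' := L.contDiff.comp f.smooth'
  decay' := by
    intro k n
    obtain ⟨C, hC⟩ := f.decay' k n
    refine ⟨‖L‖ * C, fun x => ?_⟩
    have h1 : iteratedFDeriv ℝ n (fun x => L (f x)) x
        = L.compContinuousMultilinearMap (iteratedFDeriv ℝ n (⇑f) x) :=
      L.iteratedFDeriv_comp_left f.smooth'.contDiffAt (by exact_mod_cast le_top)
    rw [h1]
    calc ‖x‖ ^ k * ‖L.compContinuousMultilinearMap (iteratedFDeriv ℝ n (⇑f) x)‖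
        ≤ ‖x‖ ^ k * (‖L‖ * ‖iteratedFDeriv ℝ n (⇑f) x‖) := by
          have := L.norm_compContinuousMultilinearMap_le (iteratedFDeriv ℝ n (⇑f) x)
          have hxk : (0:ℝ) ≤ ‖x‖ ^ k := by positivity
          nlinarith [this, hxk]
      _ = ‖L‖ * (‖x‖ ^ k * ‖iteratedFDeriv ℝ n (⇑f) x‖) := by ring
      _ ≤ ‖L‖ * C := by
          exact mul_le_mul_of_nonneg_left (hC x) (norm_nonneg L)

@[simp] lemma postcomp_apply (L : F →L[ℝ] G) (f : SchwartzMap E3 F) (x : E3) :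
    postcomp L f x = L (f x) := rfl

/-- Direction vector. -/
def e (i : Fin 3) : E3 := EuclideanSpace.single i 1

/-- Partial derivative as a continuous linear map on Schwartz space. -/
def pderivCLM (_𝕜 : Type) (m : E3) : SchwartzMap E3 ℝ →L[ℝ] SchwartzMap E3 ℝ :=
  LineDeriv.lineDerivOpCLM ℝ (SchwartzMap E3 ℝ) m

lemma pderivCLM_apply (_𝕜 : Type) (m : E3) (f : SchwartzMap E3 ℝ) (x : E3) :
    pderivCLM _𝕜 m f x = fderiv ℝ (⇑f) x m := lineDerivOp_apply_eq_fderiv m f x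

/-- Partial derivative as a Schwartz map. -/
def Dp (i : Fin 3) (f : SchwartzMap E3 ℝ) : SchwartzMap E3 ℝ := pderivCLM ℝ (e i) f

lemma Dp_apply (i : Fin 3) (f : SchwartzMap E3 ℝ) (x : E3) :
    Dp i f x = fderiv ℝ (⇑f) x (e i) := pderivCLM_apply ℝ (e i) f x

lemma pd_eq (i : Fin 3) (f : SchwartzMap E3 ℝ) {g : E3 → ℝ} (hg : ⇑f = g) :
    pd i g = ⇑(Dp i f) := by
  subst hg
  funext x
  simp [pd, Dp, pderivCLM_apply, e]

lemma bounded (f : SchwartzMap E3 ℝ) : ∃ C, ∀ x, ‖f x‖ ≤ C :=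
  ⟨SchwartzMap.seminorm ℝ 0 0 f, fun x => norm_le_seminorm ℝ f x⟩

lemma int2 (f g : SchwartzMap E3 ℝ) : Integrable (fun x => f x * g x) volume :=
  (g.integrable (μ := volume)).bdd_mul f.continuous.aestronglyMeasurable (ae_of_all _ (bounded f).choose_spec)

lemma int3 (f g h : SchwartzMap E3 ℝ) :
    Integrable (fun x => f x * g x * h x) volume := by
  obtain ⟨Cf, hCf⟩ := bounded f
  obtain ⟨Cg, hCg⟩ := bounded g
  refine (h.integrable (μ := volume)).bdd_mul (c := Cf * Cg)
    ((f.continuous.mul g.continuous).aestronglyMeasurable) (ae_of_all _ fun x => ?_)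
  calc ‖f x * g x‖ = ‖f x‖ * ‖g x‖ := norm_mul _ _
    _ ≤ Cf * Cg := by
        gcongr
        · exact (norm_nonneg _).trans (hCf x)
        · exact hCf x
        · exact hCg x

/-- Mixed partial derivatives of Schwartz functions commute. -/
lemma Dp_comm (i k : Fin 3) (f : SchwartzMap E3 ℝ) (x : E3) :
    Dp i (Dp k f) x = Dp k (Dp i f) x := by
  have hsymm : IsSymmSndFDerivAt ℝ (⇑f) x :=
    (f.smooth'.contDiffAt).isSymmSndFDerivAt
      (by rw [minSmoothness_of_isRCLikeNormedField]; norm_cast)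
  have hdf : Differentiable ℝ (fderiv ℝ (⇑f)) :=
    ((f.smooth'.fderiv_right (by norm_cast : (1:WithTop ℕ∞) + 1 ≤ _)).differentiable one_ne_zero)
  have key : ∀ m : E3, fderiv ℝ (fun y => fderiv ℝ (⇑f) y m) x
      = (fderiv ℝ (fderiv ℝ (⇑f)) x).flip m := by
    intro m
    have : HasFDerivAt (fun y => fderiv ℝ (⇑f) y m)
        ((fderiv ℝ (fderiv ℝ (⇑f)) x).flip m) x := by
      simpa using (hdf x).hasFDerivAt.clm_apply (hasFDerivAt_const m x)
    exact this.fderiv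
  have h1 : Dp i (Dp k f) x = fderiv ℝ (fderiv ℝ (⇑f)) x (e i) (e k) := by
    simp only [Dp, pderivCLM_apply]
    have : (⇑(pderivCLM ℝ (e k) f)) = fun y => fderiv ℝ (⇑f) y (e k) := by
      funext y; simp [pderivCLM_apply]
    rw [this, key (e k)]
    rfl
  have h2 : Dp k (Dp i f) x = fderiv ℝ (fderiv ℝ (⇑f)) x (e k) (e i) := by
    simp only [Dp, pderivCLM_apply]
    have : (⇑(pderivCLM ℝ (e i) f)) = fun y => fderiv ℝ (⇑f) y (e i) := by
      funext y; simp [pderivCLM_apply]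
    rw [this, key (e i)]
    rfl
  rw [h1, h2]
  exact hsymm (e i) (e k)

lemma intg_congr {f g : E3 → ℝ} (h : ∀ x, f x = g x) :
    ∫ x, f x = ∫ x, g x := by
  congr 1; exact funext h

/-- Integration by parts, key form. -/
lemma K1 (i : Fin 3) (w f g : SchwartzMap E3 ℝ) :
    ∫ x, w x * f x * Dp i g x
      = (- ∫ x, w x * Dp i f x * g x) - ∫ x, f x * Dp i w x * g x := by
  have hfd : ∀ x, fderiv ℝ (fun y => w y * f y) x (e i)
      = w x * Dp i f x + f x * Dp i w x := by
    intro x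
    rw [fderiv_fun_mul (w.differentiableAt) (f.differentiableAt)]
    simp [Dp_apply]
  have h3 : Integrable (fun x => w x * f x * g x) volume := int3 w f g
  have h2 : Integrable (fun x => w x * f x * fderiv ℝ (⇑g) x (e i)) volume := by
    have : (fun x => w x * f x * fderiv ℝ (⇑g) x (e i))
        = fun x => w x * f x * Dp i g x := by
      funext x; rw [← Dp_apply]
    rw [this]; exact int3 w f (Dp i g)
  have h1 : Integrable (fun x => fderiv ℝ (fun y => w y * f y) x (e i) * g x) volume := by
    have : (fun x => fderiv ℝ (fun y => w y * f y) x (e i) * g x)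
        = fun x => w x * Dp i f x * g x + f x * Dp i w x * g x := by
      funext x; rw [hfd x]; ring
    rw [this]
    exact (int3 w (Dp i f) g).add (int3 f (Dp i w) g)
  have main := integral_mul_fderiv_eq_neg_fderiv_mul_of_integrable
    (μ := volume) (f := fun y => w y * f y) (g := ⇑g) (v := e i)
    h1 h2 h3 (fun x _ => w.differentiableAt.mul f.differentiableAt)
    (fun x _ => g.differentiableAt)
  calc ∫ x, w x * f x * Dp i g x
      = ∫ x, w x * f x * fderiv ℝ (⇑g) x (e i) := intg_congr fun x => by rw [Dp_apply]
    _ = - ∫ x, fderiv ℝ (fun y => w y * f y) x (e i) * g x := main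
    _ = - ∫ x, (w x * Dp i f x * g x + f x * Dp i w x * g x) :=
        congrArg Neg.neg (intg_congr fun x => by rw [hfd x]; ring)
    _ = (- ∫ x, w x * Dp i f x * g x) - ∫ x, f x * Dp i w x * g x := by
        rw [integral_add (int3 w (Dp i f) g) (int3 f (Dp i w) g)]
        ring

/-- Divergence-free trick: `∑ₖ ∫ wₖ ∂ₖg g = 0`. -/
lemma K2 (w : Fin 3 → SchwartzMap E3 ℝ) (hw : ∀ x, ∑ k, Dp k (w k) x = 0)
    (g : SchwartzMap E3 ℝ) :
    ∑ k, ∫ x, w k x * Dp k g x * g x = 0 := by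
  have hk : ∀ k : Fin 3, (2:ℝ) * ∫ x, w k x * Dp k g x * g x
      = - ∫ x, g x * Dp k (w k) x * g x := by
    intro k
    have h := K1 k (w k) g g
    have h' : ∫ x, (w k) x * g x * Dp k g x = ∫ x, w k x * Dp k g x * g x :=
      intg_congr fun x => by ring
    rw [h'] at h
    linarith [h]
  have hsum : ∑ k, ∫ x, g x * Dp k (w k) x * g x = 0 := by
    rw [← integral_finset_sum _ (fun k _ => int3 g (Dp k (w k)) g)]
    have : ∀ x, ∑ k, g x * Dp k (w k) x * g x = 0 := by
      intro x
      have h2 : ∑ k, g x * Dp k (w k) x * g x = (∑ k, Dp k (w k) x) * (g x * g x) := by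
        rw [Finset.sum_mul]
        exact Finset.sum_congr rfl fun k _ => by ring
      rw [h2, hw x, zero_mul]
    calc ∫ x, ∑ k, g x * Dp k (w k) x * g x = ∫ (_ : E3), (0:ℝ) := intg_congr this
      _ = 0 := integral_zero _ _
  have h2 : (2:ℝ) * ∑ k, ∫ x, w k x * Dp k g x * g x = 0 := by
    rw [Finset.mul_sum]
    calc ∑ k, (2:ℝ) * ∫ x, w k x * Dp k g x * g x
        = ∑ k, - ∫ x, g x * Dp k (w k) x * g x := Finset.sum_congr rfl fun k _ => hk k
      _ = - ∑ k, ∫ x, g x * Dp k (w k) x * g x := by rw [Finset.sum_neg_distrib]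
      _ = 0 := by rw [hsum, neg_zero]
  linarith

/-- Core identity for a fixed scalar component `q` of `Q`. -/
lemma K3 (U : Fin 3 → SchwartzMap E3 ℝ) (hU : ∀ x, ∑ k, Dp k (U k) x = 0)
    (q : SchwartzMap E3 ℝ) :
    ∑ k : Fin 3, ∑ i : Fin 3, ∫ x, U k x * Dp k q x * Dp i (Dp i q) x
      = - ∑ k : Fin 3, ∑ i : Fin 3, ∫ x, Dp k q x * Dp i (U k) x * Dp i q x := by
  have hA : ∀ k i : Fin 3, ∫ x, U k x * Dp k q x * Dp i (Dp i q) x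
      = (- ∫ x, U k x * Dp i (Dp k q) x * Dp i q x)
        - ∫ x, Dp k q x * Dp i (U k) x * Dp i q x := by
    intro k i
    exact K1 i (U k) (Dp k q) (Dp i q)
  have hzero : ∑ k : Fin 3, ∑ i : Fin 3, ∫ x, U k x * Dp i (Dp k q) x * Dp i q x = 0 := by
    have hswap : ∀ k i : Fin 3, ∫ x, U k x * Dp i (Dp k q) x * Dp i q x
        = ∫ x, U k x * Dp k (Dp i q) x * Dp i q x :=
      fun k i => intg_congr fun x => by rw [Dp_comm i k q]
    calc ∑ k : Fin 3, ∑ i : Fin 3, ∫ x, U k x * Dp i (Dp k q) x * Dp i q x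
        = ∑ k : Fin 3, ∑ i : Fin 3, ∫ x, U k x * Dp k (Dp i q) x * Dp i q x :=
          Finset.sum_congr rfl fun k _ => Finset.sum_congr rfl fun i _ => hswap k i
      _ = ∑ i : Fin 3, ∑ k : Fin 3, ∫ x, U k x * Dp k (Dp i q) x * Dp i q x :=
          Finset.sum_comm
      _ = ∑ i : Fin 3, (0:ℝ) := Finset.sum_congr rfl fun i _ => K2 U hU (Dp i q)
      _ = 0 := by simp
  calc ∑ k : Fin 3, ∑ i : Fin 3, ∫ x, U k x * Dp k q x * Dp i (Dp i q) x
      = ∑ k : Fin 3, ∑ i : Fin 3,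
          ((- ∫ x, U k x * Dp i (Dp k q) x * Dp i q x)
            - ∫ x, Dp k q x * Dp i (U k) x * Dp i q x) :=
        Finset.sum_congr rfl fun k _ => Finset.sum_congr rfl fun i _ => hA k i
    _ = - (∑ k : Fin 3, ∑ i : Fin 3, ∫ x, U k x * Dp i (Dp k q) x * Dp i q x)
        - ∑ k : Fin 3, ∑ i : Fin 3, ∫ x, Dp k q x * Dp i (U k) x * Dp i q x := by
        simp [Finset.sum_sub_distrib, Finset.sum_neg_distrib]
    _ = _ := by rw [hzero]; ring

lemma integral_sum4 {f : Fin 3 → Fin 3 → Fin 3 → Fin 3 → E3 → ℝ}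
    (hf : ∀ a b c d, Integrable (f a b c d) volume) :
    ∫ x, ∑ a, ∑ b, ∑ c, ∑ d, f a b c d x
      = ∑ a, ∑ b, ∑ c, ∑ d, ∫ x, f a b c d x := by
  rw [integral_finset_sum _ (fun a _ => integrable_finset_sum _ (fun b _ =>
    integrable_finset_sum _ (fun c _ => integrable_finset_sum _ (fun d _ => hf a b c d))))]
  refine Finset.sum_congr rfl fun a _ => ?_
  rw [integral_finset_sum _ (fun b _ => integrable_finset_sum _ (fun c _ =>
    integrable_finset_sum _ (fun d _ => hf a b c d)))]
  refine Finset.sum_congr rfl fun b _ => ?_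
  rw [integral_finset_sum _ (fun c _ => integrable_finset_sum _ (fun d _ => hf a b c d))]
  refine Finset.sum_congr rfl fun c _ => ?_
  rw [integral_finset_sum _ (fun d _ => hf a b c d)]

lemma sum_swap4 {M : Type*} [AddCommMonoid M] (f : Fin 3 → Fin 3 → Fin 3 → Fin 3 → M) :
    ∑ i, ∑ j, ∑ α, ∑ β, f i j α β = ∑ α, ∑ β, ∑ i, ∑ j, f i j α β := by
  have h1 : ∀ i : Fin 3, ∑ j : Fin 3, ∑ α : Fin 3, ∑ β : Fin 3, f i j α β
      = ∑ α : Fin 3, ∑ β : Fin 3, ∑ j : Fin 3, f i j α β := by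
    intro i
    rw [Finset.sum_comm]
    exact Finset.sum_congr rfl fun α _ => Finset.sum_comm
  simp_rw [h1]
  rw [Finset.sum_comm]
  exact Finset.sum_congr rfl fun α _ => Finset.sum_comm

end AGTC

open AGTC

/-- cancellation identity
`∫ (u·∇)Q : ΔQ dx + ∫ (∇Q ⊗ ∇Q) : ∇u dx = 0` for divergence-free `u`. -/
theorem advect_grad_tensor_cancellation
    (u : SchwartzMap E3 Vec) (hu : DivFree ⇑u) (Q : SchwartzMap E3 Mat) :
    (∫ x, fip (advectMat ⇑u ⇑Q x) (matLap ⇑Q x)) +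
        (∫ x, fip (gradTensor ⇑Q ⇑Q x) (gradVec ⇑u x)) = 0 := by
  classical
  set U : Fin 3 → SchwartzMap E3 ℝ :=
    fun k => postcomp (ContinuousLinearMap.proj k) u with hUdef
  set Qs : Fin 3 → Fin 3 → SchwartzMap E3 ℝ :=
    fun α β =>
      postcomp ((ContinuousLinearMap.proj β : (Fin 3 → ℝ) →L[ℝ] ℝ).comp
        (ContinuousLinearMap.proj α : Mat →L[ℝ] (Fin 3 → ℝ))) Q with hQdef
  have hUc : ∀ k, ⇑(U k) = fun y => (⇑u) y k := fun k => rfl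
  have hQc : ∀ α β, ⇑(Qs α β) = fun y => (⇑Q) y α β := fun α β => rfl
  have hdivU : ∀ x, ∑ k, Dp k (U k) x = 0 := by
    intro x
    calc ∑ k, Dp k (U k) x = ∑ k, pd k (fun y => (⇑u) y k) x := by
          refine Finset.sum_congr rfl fun k _ => ?_
          rw [pd_eq k (U k) (hUc k)]
      _ = 0 := hu x
  have hpdQ : ∀ (i α β : Fin 3), pd i (fun y => (⇑Q) y α β) = ⇑(Dp i (Qs α β)) :=
    fun i α β => pd_eq i (Qs α β) (hQc α β)
  have hpdQ2 : ∀ (i j α β : Fin 3), pd i (⇑(Dp j (Qs α β))) = ⇑(Dp i (Dp j (Qs α β))) :=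
    fun i j α β => pd_eq i (Dp j (Qs α β)) rfl
  have hpdU : ∀ (i k : Fin 3), pd i (fun y => (⇑u) y k) = ⇑(Dp i (U k)) :=
    fun i k => pd_eq i (U k) (hUc k)
  -- rewrite the first integral
  have hfun1 : (fun x => fip (advectMat ⇑u ⇑Q x) (matLap ⇑Q x))
      = fun x => ∑ α, ∑ β, ∑ k, ∑ i,
          U k x * Dp k (Qs α β) x * Dp i (Dp i (Qs α β)) x := by
    funext x
    simp only [fip, advectMat, advect, matLap, lap]
    refine Finset.sum_congr rfl fun α _ => Finset.sum_congr rfl fun β _ => ?_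
    rw [Finset.sum_mul]
    refine Finset.sum_congr rfl fun k _ => ?_
    rw [Finset.mul_sum]
    refine Finset.sum_congr rfl fun i _ => ?_
    rw [hpdQ k α β, hpdQ i α β, hpdQ2 i i α β]
    rfl
  have hI1 : (∫ x, fip (advectMat ⇑u ⇑Q x) (matLap ⇑Q x))
      = ∑ α, ∑ β, ∑ k, ∑ i,
          ∫ x, U k x * Dp k (Qs α β) x * Dp i (Dp i (Qs α β)) x := by
    rw [hfun1]
    exact integral_sum4 fun α β k i => int3 (U k) (Dp k (Qs α β)) (Dp i (Dp i (Qs α β)))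
  -- rewrite the second integral
  have hfun2 : (fun x => fip (gradTensor ⇑Q ⇑Q x) (gradVec ⇑u x))
      = fun x => ∑ i, ∑ j, ∑ α, ∑ β,
          Dp i (Qs α β) x * Dp j (Qs α β) x * Dp j (U i) x := by
    funext x
    simp only [fip, gradTensor, gradVec]
    refine Finset.sum_congr rfl fun i _ => Finset.sum_congr rfl fun j _ => ?_
    rw [Finset.sum_mul]
    refine Finset.sum_congr rfl fun α _ => ?_
    rw [Finset.sum_mul]
    refine Finset.sum_congr rfl fun β _ => ?_
    rw [hpdQ i α β, hpdQ j α β, hpdU j i]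
  have hI2 : (∫ x, fip (gradTensor ⇑Q ⇑Q x) (gradVec ⇑u x))
      = ∑ α, ∑ β, ∑ k, ∑ i,
          ∫ x, Dp k (Qs α β) x * Dp i (U k) x * Dp i (Qs α β) x := by
    rw [hfun2]
    rw [integral_sum4 fun i j α β => int3 (Dp i (Qs α β)) (Dp j (Qs α β)) (Dp j (U i))]
    rw [sum_swap4]
    refine Finset.sum_congr rfl fun α _ => Finset.sum_congr rfl fun β _ =>
      Finset.sum_congr rfl fun k _ => Finset.sum_congr rfl fun i _ => ?_
    exact intg_congr fun x => by ring
  have hS1 : (∫ x, fip (advectMat ⇑u ⇑Q x) (matLap ⇑Q x))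
      = - ∑ α, ∑ β, ∑ k, ∑ i,
          ∫ x, Dp k (Qs α β) x * Dp i (U k) x * Dp i (Qs α β) x := by
    rw [hI1]
    calc ∑ α, ∑ β, ∑ k, ∑ i, ∫ x, U k x * Dp k (Qs α β) x * Dp i (Dp i (Qs α β)) x
        = ∑ α, ∑ β, (- ∑ k : Fin 3, ∑ i : Fin 3,
            ∫ x, Dp k (Qs α β) x * Dp i (U k) x * Dp i (Qs α β) x) :=
          Finset.sum_congr rfl fun α _ => Finset.sum_congr rfl fun β _ =>
            K3 U hdivU (Qs α β)
      _ = _ := by simp [Finset.sum_neg_distrib]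
  rw [hS1, hI2]
  ring
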